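/- arXiv:1812.00601 — 3 statements merged into one kernel-verified Lean document; each statement's English description precedes it below -/
import Mathlib

section
/- Let E be a real Banach space, a < b real numbers and τ = b - a. If f : ℝ → E is twice continuously differentiable on [a,b] and θ ∈ [0,1], then ‖(f(b) - f(a))/τ - (θ f'(b) + (1-θ) f'(a))‖ ≤ max(θ, 1-θ) ∫_a^b ‖f''(s)‖ ds. -/
open Set intervalIntegral

/-! By the mean value inequality for `t ↦ f t - t • c`, the slope of `f` over `[a, b]` is within
`K` of `c` as soon as `‖f' s - c‖ ≤ K` on `[a, b]`. For `c = θ • f' b + (1 - θ) • f' a` we have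
`f' s - c = θ • (f' s - f' b) + (1 - θ) • (f' s - f' a)`, and the two differences are at most
`∫ ‖f''‖` over `[s, b]` and over `[a, s]`, which add up to the integral over `[a, b]`. -/

section

variable {E : Type*} [NormedAddCommGroup E] [NormedSpace ℝ E] {a b : ℝ}

theorem norm_sub_le_integral_norm_of_hasDerivWithinAt {g g' : ℝ → E} (hab : a ≤ b)
    (hg : ∀ t ∈ Icc a b, HasDerivWithinAt g (g' t) (Icc a b) t)
    (hg' : ContinuousOn g' (Icc a b)) :
    ‖g b - g a‖ ≤ ∫ t in a..b, ‖g' t‖ := by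
  have hderiv : ∀ t ∈ Ioo a b, HasDerivAt g (g' t) t := fun t ht =>
    (hg t (Ioo_subset_Icc_self ht)).hasDerivAt (Icc_mem_nhds ht.1 ht.2)
  refine norm_sub_le_integral_of_norm_deriv_le_of_le hab
    (fun t ht => (hg t ht).continuousWithinAt)
    (fun t ht => (hderiv t ht).differentiableAt.differentiableWithinAt)
    (.of_forall fun t ht => by rw [(hderiv t ht).deriv]) ?_
  exact hg'.norm.intervalIntegrable_of_Icc hab

theorem norm_sub_smul_add_smul_le (x y z : E) {θ : ℝ} (hθ : θ ∈ Icc (0 : ℝ) 1) :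
    ‖x - (θ • y + (1 - θ) • z)‖ ≤ θ * ‖x - y‖ + (1 - θ) * ‖x - z‖ := by
  have h1θ : 0 ≤ 1 - θ := sub_nonneg.2 hθ.2
  calc ‖x - (θ • y + (1 - θ) • z)‖ = ‖θ • (x - y) + (1 - θ) • (x - z)‖ := by congr 1; module
    _ ≤ θ * ‖x - y‖ + (1 - θ) * ‖x - z‖ := by
      grw [norm_add_le, norm_smul, norm_smul, Real.norm_of_nonneg hθ.1,
        Real.norm_of_nonneg h1θ]

theorem norm_sub_smul_add_smul_endpoints_le {g g' : ℝ → E}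
    (hg : ∀ t ∈ Icc a b, HasDerivWithinAt g (g' t) (Icc a b) t)
    (hg' : ContinuousOn g' (Icc a b)) {θ : ℝ} (hθ : θ ∈ Icc (0 : ℝ) 1) {s : ℝ}
    (hs : s ∈ Icc a b) :
    ‖g s - (θ • g b + (1 - θ) • g a)‖ ≤ max θ (1 - θ) * ∫ t in a..b, ‖g' t‖ := by
  have hleft : Icc a s ⊆ Icc a b := Icc_subset_Icc_right hs.2
  have hright : Icc s b ⊆ Icc a b := Icc_subset_Icc_left hs.1
  have hsa : ‖g s - g a‖ ≤ ∫ t in a..s, ‖g' t‖ :=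
    norm_sub_le_integral_norm_of_hasDerivWithinAt hs.1
      (fun t ht => (hg t (hleft ht)).mono hleft) (hg'.mono hleft)
  have hbs : ‖g s - g b‖ ≤ ∫ t in s..b, ‖g' t‖ := by
    rw [norm_sub_rev]
    exact norm_sub_le_integral_norm_of_hasDerivWithinAt hs.2
      (fun t ht => (hg t (hright ht)).mono hright) (hg'.mono hright)
  have hsplit : (∫ t in s..b, ‖g' t‖) + ∫ t in a..s, ‖g' t‖ = ∫ t in a..b, ‖g' t‖ := by
    rw [add_comm]
    exact integral_add_adjacent_intervals
      ((hg'.mono hleft).norm.intervalIntegrable_of_Icc hs.1)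
      ((hg'.mono hright).norm.intervalIntegrable_of_Icc hs.2)
  have hM : 0 ≤ max θ (1 - θ) := hθ.1.trans (le_max_left _ _)
  calc ‖g s - (θ • g b + (1 - θ) • g a)‖
      ≤ θ * ‖g s - g b‖ + (1 - θ) * ‖g s - g a‖ := norm_sub_smul_add_smul_le _ _ _ hθ
    _ ≤ max θ (1 - θ) * (∫ t in s..b, ‖g' t‖) + max θ (1 - θ) * ∫ t in a..s, ‖g' t‖ := by
      gcongr
      · exact le_max_left _ _
      · exact le_max_right _ _
    _ = max θ (1 - θ) * ∫ t in a..b, ‖g' t‖ := by rw [← mul_add, hsplit]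

theorem norm_slope_sub_le_of_norm_deriv_sub_le {f f' : ℝ → E} {c : E} {K : ℝ} (hab : a < b)
    (hf : ∀ t ∈ Icc a b, HasDerivWithinAt f (f' t) (Icc a b) t)
    (hK : ∀ t ∈ Ico a b, ‖f' t - c‖ ≤ K) :
    ‖slope f a b - c‖ ≤ K := by
  have hmvt := norm_image_sub_le_of_norm_deriv_le_segment' (f := fun t => f t - t • c)
    (fun t ht => (hf t ht).sub (hasDerivWithinAt_id t _ |>.smul_const c) |>.congr_deriv (by simp))
    hK b (right_mem_Icc.2 hab.le)
  have hba : 0 < b - a := sub_pos.2 hab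
  have hslope : slope f a b - c = (b - a)⁻¹ • ((f b - b • c) - (f a - a • c)) := by
    rw [slope_def_module, show (f b - b • c) - (f a - a • c) = (f b - f a) - (b - a) • c by module,
      smul_sub _ _ ((b - a) • c), smul_smul, inv_mul_cancel₀ hba.ne', one_smul]
  rw [hslope, norm_smul, Real.norm_of_nonneg (inv_nonneg.2 hba.le), inv_mul_le_iff₀ hba, mul_comm]
  exact hmvt

end

theorem theta_consistency_L1_bound_general
    {E : Type*} [NormedAddCommGroup E] [NormedSpace ℝ E]
    (a b τ θ : ℝ) (hab : a < b) (hτ : τ = b - a) (hθ : θ ∈ Icc (0 : ℝ) 1)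
    (f f' f'' : ℝ → E)
    (hf : ∀ t ∈ Icc a b, HasDerivWithinAt f (f' t) (Icc a b) t)
    (hf' : ∀ t ∈ Icc a b, HasDerivWithinAt f' (f'' t) (Icc a b) t)
    (hf'' : ContinuousOn f'' (Icc a b)) :
    ‖(1 / τ) • (f b - f a) - (θ • f' b + (1 - θ) • f' a)‖
      ≤ max θ (1 - θ) * ∫ s in a..b, ‖f'' s‖ := by
  rw [hτ, one_div, ← slope_def_module]
  exact norm_slope_sub_le_of_norm_deriv_sub_le hab hf fun s hs =>
    norm_sub_smul_add_smul_endpoints_le hf' hf'' hθ (Ico_subset_Icc_self hs)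

/-- L¹-type bound for the θ-scheme consistency error:
`‖(f(b) - f(a))/τ - (θ f'(b) + (1-θ) f'(a))‖ ≤ max(θ, 1-θ) ∫_a^b ‖f''(s)‖ ds`. -/
theorem theta_consistency_L1_bound
    {E : Type*} [NormedAddCommGroup E] [NormedSpace ℝ E] [CompleteSpace E]
    (a b τ θ : ℝ) (hab : a < b) (hτ : τ = b - a) (hθ : θ ∈ Icc (0 : ℝ) 1)
    (f f' f'' : ℝ → E)
    (hf : ∀ t ∈ Icc a b, HasDerivWithinAt f (f' t) (Icc a b) t)
    (hf' : ∀ t ∈ Icc a b, HasDerivWithinAt f' (f'' t) (Icc a b) t)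
    (hf'' : ContinuousOn f'' (Icc a b)) :
    ‖(1 / τ) • (f b - f a) - (θ • f' b + (1 - θ) • f' a)‖
      ≤ max θ (1 - θ) * ∫ s in a..b, ‖f'' s‖ :=
  theta_consistency_L1_bound_general a b τ θ hab hτ hθ f f' f'' hf hf' hf''
end

section
/- Let V be a real inner product space, and let a : V × V → ℝ be a symmetric positive semidefinite bilinear form. Let τ > 0, θ ∈ [1/2, 1], N ≥ 1, and let η⁰, …, η^N and r¹, …, r^N in V satisfy, for each n = 1, …, N and every v ∈ V, ⟪(ηⁿ - η^{n-1})/τ, v⟫ + a(θ ηⁿ + (1-θ) η^{n-1}, v) = ⟪rⁿ, v⟫. Then a(η^N, η^N) ≤ a(η⁰, η⁰) + τ Σ_{j=1}^{N} ‖r^j‖². -/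
/-!
Test the scheme at step `n` with `v = ηⁿ - ηⁿ⁻¹`. For a symmetric form the θ-average satisfies
`a(θx + (1-θ)y, x - y) = (a(x,x) - a(y,y))/2 + (θ - 1/2) a(x-y, x-y)`, and the last term is
nonnegative for `θ ≥ 1/2`; Cauchy–Schwarz and Young absorb `⟪rⁿ, v⟫` into `‖v‖²/τ`, leaving
`a(ηⁿ, ηⁿ) ≤ a(ηⁿ⁻¹, ηⁿ⁻¹) + τ/2 ‖rⁿ‖²`. Summing over `n` gives the estimate.
-/

open scoped RealInnerProductSpace

open Finset

theorem le_add_sum_Icc_of_le_add {e c : ℕ → ℝ} {N : ℕ}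
    (h : ∀ n, 1 ≤ n → n ≤ N → e n ≤ e (n - 1) + c n) :
    e N ≤ e 0 + ∑ j ∈ Icc 1 N, c j := by
  induction N with
  | zero => simp
  | succ N ih =>
    have hN := ih fun n h1 h2 => h n h1 (by omega)
    have hstep := h (N + 1) (by omega) le_rfl
    rw [sum_Icc_succ_top (by omega)]
    simp only [Nat.add_sub_cancel] at hstep
    linarith

section ThetaStep

variable {V : Type*} [NormedAddCommGroup V] [InnerProductSpace ℝ V]
  {a : V →ₗ[ℝ] V →ₗ[ℝ] ℝ}

theorem apply_theta_average_sub (hsym : ∀ x y : V, a x y = a y x) (θ : ℝ) (x y : V) :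
    a (θ • x + (1 - θ) • y) (x - y)
      = (a x x - a y y) / 2 + (θ - 1 / 2) * a (x - y) (x - y) := by
  simp only [map_add, map_smul, map_sub, LinearMap.add_apply, LinearMap.smul_apply,
    LinearMap.sub_apply, smul_eq_mul, hsym y x]
  ring

theorem half_sub_le_apply_theta_average_sub (hsym : ∀ x y : V, a x y = a y x)
    (hpos : ∀ v : V, 0 ≤ a v v) {θ : ℝ} (hθ : 1 / 2 ≤ θ) (x y : V) :
    (a x x - a y y) / 2 ≤ a (θ • x + (1 - θ) • y) (x - y) := by
  rw [apply_theta_average_sub hsym]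
  nlinarith [hpos (x - y)]

theorem real_inner_sub_norm_sq_div_le (r d : V) {τ : ℝ} (hτ : 0 < τ) :
    ⟪r, d⟫ - ‖d‖ ^ 2 / τ ≤ τ / 4 * ‖r‖ ^ 2 := by
  have hsquare :
      τ / 4 * ‖r‖ ^ 2 - (‖r‖ * ‖d‖ - ‖d‖ ^ 2 / τ) = (τ * ‖r‖ / 2 - ‖d‖) ^ 2 / τ := by
    field_simp
    ring
  have hsquare_nonneg : 0 ≤ (τ * ‖r‖ / 2 - ‖d‖) ^ 2 / τ := by positivity
  linarith [real_inner_le_norm r d]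

theorem theta_step_energy_le (hsym : ∀ x y : V, a x y = a y x) (hpos : ∀ v : V, 0 ≤ a v v)
    {τ θ : ℝ} (hτ : 0 < τ) (hθ : 1 / 2 ≤ θ) {x y r : V}
    (hstep : ∀ v : V, ⟪(1 / τ) • (x - y), v⟫ + a (θ • x + (1 - θ) • y) v = ⟪r, v⟫) :
    a x x ≤ a y y + τ / 2 * ‖r‖ ^ 2 := by
  have htest := hstep (x - y)
  rw [real_inner_smul_left, real_inner_self_eq_norm_sq, one_div_mul_eq_div] at htest
  linarith [half_sub_le_apply_theta_average_sub hsym hpos hθ x y,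
    real_inner_sub_norm_sq_div_le r (x - y) hτ]

end ThetaStep

theorem theta_scheme_energy_estimate_general
    {V : Type*} [NormedAddCommGroup V] [InnerProductSpace ℝ V]
    (a : V →ₗ[ℝ] V →ₗ[ℝ] ℝ)
    (hsym : ∀ x y : V, a x y = a y x)
    (hpos : ∀ v : V, 0 ≤ a v v)
    (τ θ : ℝ) (hτ : 0 < τ) (hθ : θ ∈ Set.Icc (1 / 2 : ℝ) 1)
    (N : ℕ) (η r : ℕ → V)
    (hscheme : ∀ n, 1 ≤ n → n ≤ N → ∀ v : V,
      ⟪(1 / τ) • (η n - η (n - 1)), v⟫ + a (θ • η n + (1 - θ) • η (n - 1)) v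
        = ⟪r n, v⟫) :
    a (η N) (η N) ≤ a (η 0) (η 0) + τ * ∑ j ∈ Finset.Icc 1 N, ‖r j‖ ^ 2 := by
  rw [mul_sum]
  refine le_add_sum_Icc_of_le_add (e := fun n => a (η n) (η n)) fun n h1 h2 => ?_
  linarith [theta_step_energy_le hsym hpos hτ hθ.1 (hscheme n h1 h2),
    mul_nonneg hτ.le (sq_nonneg ‖r n‖)]

/-- Energy-norm estimate for the θ-scheme error recursion, `θ ∈ [1/2, 1]`:
`a(η^N, η^N) ≤ a(η⁰, η⁰) + τ Σ_{j=1}^N ‖r^j‖²`. -/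
theorem theta_scheme_energy_estimate
    {V : Type*} [NormedAddCommGroup V] [InnerProductSpace ℝ V]
    (a : V →ₗ[ℝ] V →ₗ[ℝ] ℝ)
    (hsym : ∀ x y : V, a x y = a y x)
    (hpos : ∀ v : V, 0 ≤ a v v)
    (τ θ : ℝ) (hτ : 0 < τ) (hθ : θ ∈ Set.Icc (1 / 2 : ℝ) 1)
    (N : ℕ) (hN : 1 ≤ N) (η r : ℕ → V)
    (hscheme : ∀ n, 1 ≤ n → n ≤ N → ∀ v : V,
      ⟪(1 / τ) • (η n - η (n - 1)), v⟫ + a (θ • η n + (1 - θ) • η (n - 1)) v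
        = ⟪r n, v⟫) :
    a (η N) (η N) ≤ a (η 0) (η 0) + τ * ∑ j ∈ Finset.Icc 1 N, ‖r j‖ ^ 2 :=
  theta_scheme_energy_estimate_general a hsym hpos τ θ hτ hθ N η r hscheme
end

section
/- (Abstract second-order convergence of the Crank–Nicolson scheme in the energy norm.) Let V be a real inner product space, and let a : V × V → ℝ be a symmetric positive semidefinite bilinear form. Let τ > 0, N ≥ 1, T = Nτ, tⁿ = nτ. Let u : [0,T] → V be three times continuously differentiable and ρ : [0,T] → V continuously differentiable (in the norm of V), and suppose η⁰, …, η^N ∈ V satisfy, for each n = 1, …, N and every v ∈ V, ⟪(ηⁿ - η^{n-1})/τ, v⟫ + a((ηⁿ + η^{n-1})/2, v) = -⟪(ρ(tⁿ) - ρ(t^{n-1}))/τ, v⟫ + ⟪(u(tⁿ) - u(t^{n-1}))/τ - (u'(tⁿ) + u'(t^{n-1}))/2, v⟫. Then a(η^N, η^N) ≤ a(η⁰, η⁰) + 2 ∫₀^T ‖ρ'(s)‖² ds + (τ⁴ / 60) ∫₀^T ‖u'''(s)‖² ds. -/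
/-!
Testing the scheme with `ηⁿ - ηⁿ⁻¹` and using the symmetry of `a` turns one step into
`‖ηⁿ - ηⁿ⁻¹‖² / τ + (a(ηⁿ, ηⁿ) - a(ηⁿ⁻¹, ηⁿ⁻¹)) / 2 = ⟪fⁿ, ηⁿ - ηⁿ⁻¹⟫`, so by Young's inequality
the energy grows by at most `τ ‖fⁿ‖² / 2` per step. The forcing `fⁿ` consists of a difference
quotient of `ρ`, bounded by the fundamental theorem of calculus and Cauchy–Schwarz, and the
trapezoid-rule defect of `u'`, which the Peano kernel `(s - tⁿ⁻¹)(tⁿ - s)` expresses through `u'''`;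
Cauchy–Schwarz against that kernel gives the constant `1/120` per step. Summing over the steps
telescopes the energy. Since `V` need not be complete, all integrals are taken of the scalar
functions `⟪·, v⟫`.
-/

open Set intervalIntegral MeasureTheory
open scoped RealInnerProductSpace Interval

section Real

variable {t₀ t₁ : ℝ}

theorem sq_integral_mul_le_integral_sq_mul_integral_sq (ht : t₀ ≤ t₁) {f g : ℝ → ℝ}
    (hf : ContinuousOn f (Icc t₀ t₁)) (hg : ContinuousOn g (Icc t₀ t₁)) :
    (∫ s in t₀..t₁, f s * g s) ^ 2 ≤ (∫ s in t₀..t₁, f s ^ 2) * ∫ s in t₀..t₁, g s ^ 2 := by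
  have hf2 : IntervalIntegrable (fun s => f s ^ 2) volume t₀ t₁ :=
    (hf.pow 2).intervalIntegrable_of_Icc ht
  have hg2 : IntervalIntegrable (fun s => g s ^ 2) volume t₀ t₁ :=
    (hg.pow 2).intervalIntegrable_of_Icc ht
  have hfg : IntervalIntegrable (fun s => f s * g s) volume t₀ t₁ :=
    (hf.mul hg).intervalIntegrable_of_Icc ht
  have hquadratic : ∀ x : ℝ, 0 ≤ (∫ s in t₀..t₁, g s ^ 2) * (x * x)
      + (2 * ∫ s in t₀..t₁, f s * g s) * x + ∫ s in t₀..t₁, f s ^ 2 := by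
    intro x
    have h := integral_nonneg (μ := volume) ht fun s _ => sq_nonneg (x * g s + f s)
    have hexpand : (fun s => (x * g s + f s) ^ 2)
        = fun s => x ^ 2 * g s ^ 2 + 2 * x * (f s * g s) + f s ^ 2 := by
      funext s; ring
    rw [hexpand, integral_add ((hg2.const_mul _).add (hfg.const_mul _)) hf2,
      integral_add (hg2.const_mul _) (hfg.const_mul _), intervalIntegral.integral_const_mul,
      intervalIntegral.integral_const_mul] at h
    linarith
  have hdiscrim := discrim_le_zero hquadratic
  rw [discrim] at hdiscrim
  linarith

theorem integral_peano_kernel_sq (t₀ t₁ : ℝ) :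
    ∫ s in t₀..t₁, ((s - t₀) * (t₁ - s)) ^ 2 = (t₁ - t₀) ^ 5 / 30 := by
  have hantideriv : ∀ s : ℝ, HasDerivAt
      (fun s => (t₁ - t₀) ^ 2 / 3 * (s - t₀) ^ 3 - (t₁ - t₀) / 2 * (s - t₀) ^ 4
        + (s - t₀) ^ 5 / 5)
      (((s - t₀) * (t₁ - s)) ^ 2) s := by
    intro s
    have h := (hasDerivAt_id' s).sub_const t₀
    refine ((((h.pow 3).const_mul ((t₁ - t₀) ^ 2 / 3)).sub
      ((h.pow 4).const_mul ((t₁ - t₀) / 2))).add ((h.pow 5).div_const 5)).congr_deriv ?_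
    push_cast
    ring
  rw [integral_eq_sub_of_hasDerivAt (fun s _ => hantideriv s)
    (Continuous.intervalIntegrable (by fun_prop) t₀ t₁)]
  ring

theorem sub_sub_trapezoid_eq_integral_peano_kernel {f f' f'' f''' : ℝ → ℝ}
    (hf : ∀ t ∈ [[t₀, t₁]], HasDerivWithinAt f (f' t) [[t₀, t₁]] t)
    (hf' : ∀ t ∈ [[t₀, t₁]], HasDerivWithinAt f' (f'' t) [[t₀, t₁]] t)
    (hf'' : ∀ t ∈ [[t₀, t₁]], HasDerivWithinAt f'' (f''' t) [[t₀, t₁]] t)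
    (hf''' : ContinuousOn f''' [[t₀, t₁]]) :
    f t₁ - f t₀ - (t₁ - t₀) / 2 * (f' t₀ + f' t₁)
      = -(1 / 2) * ∫ s in t₀..t₁, (s - t₀) * (t₁ - s) * f''' s := by
  have hkernel : ∀ s ∈ [[t₀, t₁]],
      HasDerivWithinAt (fun s => (s - t₀) * (t₁ - s)) (t₀ + t₁ - 2 * s) [[t₀, t₁]] s :=
    fun s _ => (((hasDerivAt_id' s).sub_const t₀).mul
      ((hasDerivAt_id' s).const_sub t₁)).hasDerivWithinAt.congr_deriv (by ring)
  have hkernel' : ∀ s ∈ [[t₀, t₁]], HasDerivWithinAt (fun s => t₀ + t₁ - 2 * s) (-2) [[t₀, t₁]] s :=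
    fun s _ => (((hasDerivAt_id' s).const_mul 2).const_sub (t₀ + t₁)).hasDerivWithinAt.congr_deriv
      (by ring)
  have hkernel'' : ∀ s ∈ [[t₀, t₁]], HasDerivWithinAt (fun _ => (-2 : ℝ)) 0 [[t₀, t₁]] s :=
    fun s _ => hasDerivWithinAt_const s _ _
  have hcont {g g' : ℝ → ℝ} (hg : ∀ t ∈ [[t₀, t₁]], HasDerivWithinAt g (g' t) [[t₀, t₁]] t) :
      IntervalIntegrable g volume t₀ t₁ :=
    ContinuousOn.intervalIntegrable fun t ht => (hg t ht).continuousWithinAt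
  rw [integral_mul_deriv_eq_deriv_mul_of_hasDerivWithinAt hkernel hf''
      (Continuous.intervalIntegrable (by fun_prop) _ _) hf'''.intervalIntegrable,
    integral_mul_deriv_eq_deriv_mul_of_hasDerivWithinAt hkernel' hf'
      intervalIntegrable_const (hcont hf''),
    integral_mul_deriv_eq_deriv_mul_of_hasDerivWithinAt hkernel'' hf
      intervalIntegrable_const (hcont hf')]
  simp only [zero_mul, intervalIntegral.integral_zero]
  ring

end Real

section InnerProductSpace

variable {V : Type*} [NormedAddCommGroup V] [InnerProductSpace ℝ V] {t₀ t₁ : ℝ}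

theorem HasDerivWithinAt.inner_const {f : ℝ → V} {f' : V} {s : Set ℝ} {t : ℝ}
    (hf : HasDerivWithinAt f f' s t) (v : V) :
    HasDerivWithinAt (fun x => ⟪f x, v⟫) ⟪f', v⟫ s t := by
  simpa using hf.inner ℝ (hasDerivWithinAt_const t s v)

theorem norm_sq_le_of_inner_eq_integral (ht : t₀ ≤ t₁) {k : ℝ → ℝ} {g : ℝ → V} {w : V}
    (hk : ContinuousOn k (Icc t₀ t₁)) (hg : ContinuousOn g (Icc t₀ t₁))
    (hw : ∀ v, ⟪w, v⟫ = ∫ s in t₀..t₁, k s * ⟪g s, v⟫) :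
    ‖w‖ ^ 2 ≤ (∫ s in t₀..t₁, k s ^ 2) * ∫ s in t₀..t₁, ‖g s‖ ^ 2 := by
  set I := ∫ s in t₀..t₁, |k s| * ‖g s‖
  have hI : 0 ≤ I := integral_nonneg ht fun s _ => by positivity
  have hw_le : ‖w‖ ^ 2 ≤ I * ‖w‖ := by
    rw [← real_inner_self_eq_norm_sq, hw, ← intervalIntegral.integral_mul_const]
    refine integral_mono_on ht
      ((hk.mul (hg.inner continuousOn_const)).intervalIntegrable_of_Icc ht)
      (((hk.abs.mul hg.norm).mul continuousOn_const).intervalIntegrable_of_Icc ht) fun s _ => ?_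
    calc k s * ⟪g s, w⟫ ≤ |k s| * |⟪g s, w⟫| := (le_abs_self _).trans (abs_mul _ _).le
      _ ≤ |k s| * (‖g s‖ * ‖w‖) := by gcongr; exact abs_real_inner_le_norm _ _
      _ = |k s| * ‖g s‖ * ‖w‖ := by ring
  have hw_le_I : ‖w‖ ≤ I := by
    rcases (norm_nonneg w).eq_or_lt with hw0 | hw0
    · exact hw0 ▸ hI
    · exact le_of_mul_le_mul_right (by linarith) hw0
  calc ‖w‖ ^ 2 ≤ I ^ 2 := pow_le_pow_left₀ (norm_nonneg w) hw_le_I 2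
    _ ≤ (∫ s in t₀..t₁, |k s| ^ 2) * ∫ s in t₀..t₁, ‖g s‖ ^ 2 :=
      sq_integral_mul_le_integral_sq_mul_integral_sq ht hk.abs hg.norm
    _ = (∫ s in t₀..t₁, k s ^ 2) * ∫ s in t₀..t₁, ‖g s‖ ^ 2 := by simp only [sq_abs]

theorem norm_sub_sq_le_mul_integral_norm_deriv_sq (ht : t₀ ≤ t₁) {g g' : ℝ → V}
    (hg : ∀ t ∈ Icc t₀ t₁, HasDerivWithinAt g (g' t) (Icc t₀ t₁) t)
    (hg' : ContinuousOn g' (Icc t₀ t₁)) :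
    ‖g t₁ - g t₀‖ ^ 2 ≤ (t₁ - t₀) * ∫ s in t₀..t₁, ‖g' s‖ ^ 2 := by
  have h := norm_sq_le_of_inner_eq_integral ht (k := fun _ => 1) continuousOn_const hg'
    (w := g t₁ - g t₀) fun v => ?_
  · simpa using h
  · simp only [one_mul]
    rw [inner_sub_left, integral_eq_sub_of_hasDerivAt_of_le ht
      (fun t ht => ((hg t ht).inner_const v).continuousWithinAt)
      (fun t ht => ((hg t (Ioo_subset_Icc_self ht)).inner_const v).hasDerivAt
        (Icc_mem_nhds ht.1 ht.2))
      ((hg'.inner continuousOn_const).intervalIntegrable_of_Icc ht)]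

theorem norm_trapezoid_error_sq_le (ht : t₀ ≤ t₁) {u u' u'' u''' : ℝ → V}
    (hu : ∀ t ∈ Icc t₀ t₁, HasDerivWithinAt u (u' t) (Icc t₀ t₁) t)
    (hu' : ∀ t ∈ Icc t₀ t₁, HasDerivWithinAt u' (u'' t) (Icc t₀ t₁) t)
    (hu'' : ∀ t ∈ Icc t₀ t₁, HasDerivWithinAt u'' (u''' t) (Icc t₀ t₁) t)
    (hu''' : ContinuousOn u''' (Icc t₀ t₁)) :
    ‖u t₁ - u t₀ - ((t₁ - t₀) / 2) • (u' t₀ + u' t₁)‖ ^ 2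
      ≤ (t₁ - t₀) ^ 5 / 120 * ∫ s in t₀..t₁, ‖u''' s‖ ^ 2 := by
  have h := norm_sq_le_of_inner_eq_integral ht (k := fun s => -(1 / 2) * ((s - t₀) * (t₁ - s)))
    (by fun_prop) hu''' (w := u t₁ - u t₀ - ((t₁ - t₀) / 2) • (u' t₀ + u' t₁)) fun v => ?_
  · rw [intervalIntegral.integral_congr (g := fun s => 1 / 4 * ((s - t₀) * (t₁ - s)) ^ 2)
      fun s _ => by ring, intervalIntegral.integral_const_mul, integral_peano_kernel_sq] at h
    linarith
  · rw [← uIcc_of_le ht] at hu hu' hu'' hu'''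
    have h := sub_sub_trapezoid_eq_integral_peano_kernel (fun t ht => (hu t ht).inner_const v)
      (fun t ht => (hu' t ht).inner_const v) (fun t ht => (hu'' t ht).inner_const v)
      (hu'''.inner continuousOn_const)
    simp only [inner_sub_left, inner_add_left, real_inner_smul_left]
    rw [h, ← intervalIntegral.integral_const_mul]
    congr 1 with s
    ring

theorem energy_sub_le_of_crank_nicolson_step (a : V →ₗ[ℝ] V →ₗ[ℝ] ℝ)
    (hsym : ∀ x y : V, a x y = a y x) {τ : ℝ} (hτ : 0 < τ) {e₀ e₁ f : V}
    (hstep : ∀ v : V, ⟪(1 / τ) • (e₁ - e₀), v⟫ + a ((1 / 2 : ℝ) • (e₁ + e₀)) v = ⟪f, v⟫) :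
    a e₁ e₁ - a e₀ e₀ ≤ τ / 2 * ‖f‖ ^ 2 := by
  set d := e₁ - e₀
  have henergy : a ((1 / 2 : ℝ) • (e₁ + e₀)) d = (a e₁ e₁ - a e₀ e₀) / 2 := by
    simp only [d, map_smul, map_add, map_sub, LinearMap.smul_apply, LinearMap.add_apply,
      smul_eq_mul]
    linear_combination hsym e₀ e₁ / 2
  have hyoung : ‖f‖ * ‖d‖ ≤ 1 / τ * ‖d‖ ^ 2 + τ / 4 * ‖f‖ ^ 2 := by
    have hsq : 0 ≤ (‖d‖ - τ / 2 * ‖f‖) ^ 2 / τ := by positivity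
    have hexpand : (‖d‖ - τ / 2 * ‖f‖) ^ 2 / τ = 1 / τ * ‖d‖ ^ 2 + τ / 4 * ‖f‖ ^ 2 - ‖f‖ * ‖d‖ := by
      field_simp
      ring
    linarith
  have h := hstep d
  rw [real_inner_smul_left, real_inner_self_eq_norm_sq, henergy] at h
  have hCS := real_inner_le_norm f d
  linarith

theorem energy_sub_le_integral_of_crank_nicolson_step (a : V →ₗ[ℝ] V →ₗ[ℝ] ℝ)
    (hsym : ∀ x y : V, a x y = a y x) {τ : ℝ} (hτ : 0 < τ) (ht : t₁ = t₀ + τ)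
    {u u' u'' u''' ρ ρ' : ℝ → V}
    (hu : ∀ t ∈ Icc t₀ t₁, HasDerivWithinAt u (u' t) (Icc t₀ t₁) t)
    (hu' : ∀ t ∈ Icc t₀ t₁, HasDerivWithinAt u' (u'' t) (Icc t₀ t₁) t)
    (hu'' : ∀ t ∈ Icc t₀ t₁, HasDerivWithinAt u'' (u''' t) (Icc t₀ t₁) t)
    (hu''' : ContinuousOn u''' (Icc t₀ t₁))
    (hρ : ∀ t ∈ Icc t₀ t₁, HasDerivWithinAt ρ (ρ' t) (Icc t₀ t₁) t)
    (hρ' : ContinuousOn ρ' (Icc t₀ t₁)) {e₀ e₁ : V}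
    (hstep : ∀ v : V, ⟪(1 / τ) • (e₁ - e₀), v⟫ + a ((1 / 2 : ℝ) • (e₁ + e₀)) v
      = -⟪(1 / τ) • (ρ t₁ - ρ t₀), v⟫
        + ⟪(1 / τ) • (u t₁ - u t₀) - (1 / 2 : ℝ) • (u' t₁ + u' t₀), v⟫) :
    a e₁ e₁ - a e₀ e₀ ≤ ∫ s in t₀..t₁, ‖ρ' s‖ ^ 2 + τ ^ 4 / 120 * ‖u''' s‖ ^ 2 := by
  have hτt : t₁ - t₀ = τ := by rw [ht]; ring
  have hle : t₀ ≤ t₁ := by linarith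
  set r := (1 / τ) • (ρ t₁ - ρ t₀)
  set ω := (1 / τ) • (u t₁ - u t₀) - (1 / 2 : ℝ) • (u' t₁ + u' t₀)
  have henergy := energy_sub_le_of_crank_nicolson_step a hsym hτ (f := ω - r)
    fun v => by rw [hstep, inner_sub_left ω r v]; ring
  have hunscale : ∀ (x : V) (C : ℝ), ‖τ • x‖ ^ 2 ≤ τ * C → τ * ‖x‖ ^ 2 ≤ C := by
    intro x C h
    rw [norm_smul, Real.norm_of_nonneg hτ.le, mul_pow, sq, mul_assoc] at h
    exact le_of_mul_le_mul_left h hτ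
  have hr : τ * ‖r‖ ^ 2 ≤ ∫ s in t₀..t₁, ‖ρ' s‖ ^ 2 := by
    refine hunscale r _ ?_
    rw [smul_smul, mul_one_div_cancel hτ.ne', one_smul, ← hτt]
    exact norm_sub_sq_le_mul_integral_norm_deriv_sq hle hρ hρ'
  have hω : τ * ‖ω‖ ^ 2 ≤ τ ^ 4 / 120 * ∫ s in t₀..t₁, ‖u''' s‖ ^ 2 := by
    refine hunscale ω _ ?_
    have htrapezoid : τ • ω = u t₁ - u t₀ - ((t₁ - t₀) / 2) • (u' t₀ + u' t₁) := by
      rw [hτt]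
      match_scalars <;> field_simp
    rw [htrapezoid]
    calc _ ≤ (t₁ - t₀) ^ 5 / 120 * ∫ s in t₀..t₁, ‖u''' s‖ ^ 2 :=
          norm_trapezoid_error_sq_le hle hu hu' hu'' hu'''
      _ = τ * (τ ^ 4 / 120 * ∫ s in t₀..t₁, ‖u''' s‖ ^ 2) := by rw [hτt]; ring
  have hparallelogram := parallelogram_law_with_norm ℝ ω r
  have hρ'_sq : ContinuousOn (fun s => ‖ρ' s‖ ^ 2) (Icc t₀ t₁) := by fun_prop
  have hu'''_sq : ContinuousOn (fun s => τ ^ 4 / 120 * ‖u''' s‖ ^ 2) (Icc t₀ t₁) := by fun_prop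
  rw [intervalIntegral.integral_add (hρ'_sq.intervalIntegrable_of_Icc hle)
    (hu'''_sq.intervalIntegrable_of_Icc hle), intervalIntegral.integral_const_mul]
  nlinarith [sq_nonneg ‖ω + r‖]

end InnerProductSpace

theorem sub_le_integral_of_succ_sub_le_integral {x p : ℕ → ℝ} {F : ℝ → ℝ} {N : ℕ}
    (hF : ∀ k < N, IntervalIntegrable F volume (p k) (p (k + 1)))
    (h : ∀ k < N, x (k + 1) - x k ≤ ∫ s in p k..p (k + 1), F s) :
    x N - x 0 ≤ ∫ s in p 0..p N, F s := by
  rw [← Finset.sum_range_sub, ← sum_integral_adjacent_intervals hF]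
  exact Finset.sum_le_sum fun k hk => h k (Finset.mem_range.mp hk)

theorem crank_nicolson_energy_convergence_general
    {V : Type*} [NormedAddCommGroup V] [InnerProductSpace ℝ V]
    (a : V →ₗ[ℝ] V →ₗ[ℝ] ℝ)
    (hsym : ∀ x y : V, a x y = a y x)
    (τ : ℝ) (hτ : 0 < τ) (N : ℕ) (T : ℝ) (hT : T = N * τ)
    (u u' u'' u''' ρ ρ' : ℝ → V)
    (hu : ∀ t ∈ Icc (0 : ℝ) T, HasDerivWithinAt u (u' t) (Icc 0 T) t)
    (hu' : ∀ t ∈ Icc (0 : ℝ) T, HasDerivWithinAt u' (u'' t) (Icc 0 T) t)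
    (hu'' : ∀ t ∈ Icc (0 : ℝ) T, HasDerivWithinAt u'' (u''' t) (Icc 0 T) t)
    (hu''' : ContinuousOn u''' (Icc 0 T))
    (hρ : ∀ t ∈ Icc (0 : ℝ) T, HasDerivWithinAt ρ (ρ' t) (Icc 0 T) t)
    (hρ' : ContinuousOn ρ' (Icc 0 T))
    (η : ℕ → V)
    (hscheme : ∀ n, 1 ≤ n → n ≤ N → ∀ v : V,
      ⟪(1 / τ) • (η n - η (n - 1)), v⟫ + a ((1 / 2 : ℝ) • (η n + η (n - 1))) v
        = -⟪(1 / τ) • (ρ ((n : ℝ) * τ) - ρ (((n : ℝ) - 1) * τ)), v⟫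
          + ⟪(1 / τ) • (u ((n : ℝ) * τ) - u (((n : ℝ) - 1) * τ))
              - (1 / 2 : ℝ) • (u' ((n : ℝ) * τ) + u' (((n : ℝ) - 1) * τ)), v⟫) :
    a (η N) (η N) ≤ a (η 0) (η 0) + 2 * (∫ s in (0 : ℝ)..T, ‖ρ' s‖ ^ 2)
      + (τ ^ 4 / 60) * ∫ s in (0 : ℝ)..T, ‖u''' s‖ ^ 2 := by
  have hT₀ : 0 ≤ T := hT ▸ by positivity
  have hsub : ∀ k < N, Icc ((k : ℝ) * τ) (((k + 1 : ℕ) : ℝ) * τ) ⊆ Icc 0 T := fun k hk =>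
    Icc_subset_Icc (by positivity) (hT ▸ by gcongr; exact_mod_cast hk)
  have hρ'_sq : ContinuousOn (fun s => ‖ρ' s‖ ^ 2) (Icc 0 T) := by fun_prop
  have hu'''_sq : ContinuousOn (fun s => τ ^ 4 / 120 * ‖u''' s‖ ^ 2) (Icc 0 T) := by fun_prop
  have htelescope := sub_le_integral_of_succ_sub_le_integral (x := fun k => a (η k) (η k))
    (p := fun k : ℕ => (k : ℝ) * τ) (F := fun s => ‖ρ' s‖ ^ 2 + τ ^ 4 / 120 * ‖u''' s‖ ^ 2)
    (fun k hk => ((hρ'_sq.add hu'''_sq).mono (hsub k hk)).intervalIntegrable_of_Icc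
      (by gcongr; simp))
    fun k hk => by
      have hstep := hscheme (k + 1) (by omega) hk
      rw [Nat.add_sub_cancel, show ((k + 1 : ℕ) : ℝ) - 1 = k by push_cast; ring] at hstep
      have hres {f f' : ℝ → V} (hf : ∀ t ∈ Icc 0 T, HasDerivWithinAt f (f' t) (Icc 0 T) t) :=
        fun t ht => (hf t (hsub k hk ht)).mono (hsub k hk)
      exact energy_sub_le_integral_of_crank_nicolson_step a hsym hτ (by push_cast; ring)
        (hres hu) (hres hu') (hres hu'') (hu'''.mono (hsub k hk)) (hres hρ)
        (hρ'.mono (hsub k hk)) hstep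
  simp only [CharP.cast_eq_zero, zero_mul, ← hT] at htelescope
  rw [intervalIntegral.integral_add (hρ'_sq.intervalIntegrable_of_Icc hT₀)
    (hu'''_sq.intervalIntegrable_of_Icc hT₀), intervalIntegral.integral_const_mul] at htelescope
  have hρ'_nonneg : 0 ≤ ∫ s in (0 : ℝ)..T, ‖ρ' s‖ ^ 2 :=
    integral_nonneg hT₀ fun s _ => by positivity
  have hu'''_nonneg : 0 ≤ τ ^ 4 * ∫ s in (0 : ℝ)..T, ‖u''' s‖ ^ 2 :=
    mul_nonneg (by positivity) (integral_nonneg hT₀ fun s _ => by positivity)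
  linarith

/-- Abstract second-order convergence of the Crank–Nicolson scheme in the energy norm:
`a(η^N, η^N) ≤ a(η⁰, η⁰) + 2 ∫₀ᵀ ‖ρ'‖² + (τ⁴/60) ∫₀ᵀ ‖u'''‖²`. -/
theorem crank_nicolson_energy_convergence
    {V : Type*} [NormedAddCommGroup V] [InnerProductSpace ℝ V]
    (a : V →ₗ[ℝ] V →ₗ[ℝ] ℝ)
    (hsym : ∀ x y : V, a x y = a y x)
    (hpos : ∀ v : V, 0 ≤ a v v)
    (τ : ℝ) (hτ : 0 < τ) (N : ℕ) (hN : 1 ≤ N) (T : ℝ) (hT : T = N * τ)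
    (u u' u'' u''' ρ ρ' : ℝ → V)
    (hu : ∀ t ∈ Icc (0 : ℝ) T, HasDerivWithinAt u (u' t) (Icc 0 T) t)
    (hu' : ∀ t ∈ Icc (0 : ℝ) T, HasDerivWithinAt u' (u'' t) (Icc 0 T) t)
    (hu'' : ∀ t ∈ Icc (0 : ℝ) T, HasDerivWithinAt u'' (u''' t) (Icc 0 T) t)
    (hu''' : ContinuousOn u''' (Icc 0 T))
    (hρ : ∀ t ∈ Icc (0 : ℝ) T, HasDerivWithinAt ρ (ρ' t) (Icc 0 T) t)
    (hρ' : ContinuousOn ρ' (Icc 0 T))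
    (η : ℕ → V)
    (hscheme : ∀ n, 1 ≤ n → n ≤ N → ∀ v : V,
      ⟪(1 / τ) • (η n - η (n - 1)), v⟫ + a ((1 / 2 : ℝ) • (η n + η (n - 1))) v
        = -⟪(1 / τ) • (ρ ((n : ℝ) * τ) - ρ (((n : ℝ) - 1) * τ)), v⟫
          + ⟪(1 / τ) • (u ((n : ℝ) * τ) - u (((n : ℝ) - 1) * τ))
              - (1 / 2 : ℝ) • (u' ((n : ℝ) * τ) + u' (((n : ℝ) - 1) * τ)), v⟫) :
    a (η N) (η N) ≤ a (η 0) (η 0) + 2 * (∫ s in (0 : ℝ)..T, ‖ρ' s‖ ^ 2)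
      + (τ ^ 4 / 60) * ∫ s in (0 : ℝ)..T, ‖u''' s‖ ^ 2 :=
  crank_nicolson_energy_convergence_general a hsym τ hτ N T hT u u' u'' u''' ρ ρ' hu hu' hu'' hu'''
    hρ hρ' η hscheme
end
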